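/- arXiv:1604.08764 — 13 statements merged into one kernel-verified Lean document; each statement's English description precedes it below -/
import Mathlib

section
/- If there exists a feasible labeling Ψ with Ψ(v) = i, then for every label j ≠ i, the vertices v_i and v_j lie in different connected components of the auxiliary graph H. -/
open SimpleGraph

variable {V L : Type}

/-- A labeling is feasible if every edge constraint is satisfied. -/
def Feasible (G : SimpleGraph V) (phi : V → V → Equiv.Perm L) (Psi : V → L) : Prop :=
  ∀ u w : V, G.Adj u w → Psi w = (phi u w) (Psi u)

/-- The permutations on the two endpoints of an edge are mutually inverse. -/
def PhiInv (phi : V → V → Equiv.Perm L) : Prop :=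
  ∀ u w : V, phi w u = (phi u w)⁻¹

/-- `H` is the auxiliary graph on `V × L`: `(u,i)` adjacent to `(w,j)` iff
`u,w` adjacent in `G` and `j = phi u w i`. -/
def AuxAdj (G : SimpleGraph V) (phi : V → V → Equiv.Perm L)
    (H : SimpleGraph (V × L)) : Prop :=
  ∀ p q : V × L, H.Adj p q ↔ (G.Adj p.1 q.1 ∧ q.2 = (phi p.1 q.1) p.2)

theorem feasible_labeling_separates_copies
    [Fintype V] [Fintype L] [DecidableEq V] [DecidableEq L]
    (G : SimpleGraph V) (phi : V → V → Equiv.Perm L) (H : SimpleGraph (V × L))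
    (hphi : PhiInv phi) (hH : AuxAdj G phi H)
    (v : V) (i : L)
    (hfeas : ∃ Psi : V → L, Feasible G phi Psi ∧ Psi v = i) :
    ∀ j : L, j ≠ i → ¬ H.Reachable (v, i) (v, j) := by
  obtain ⟨Psi, hPsi, hvi⟩ := hfeas
  have key : ∀ p q : V × L, H.Walk p q → Psi p.1 = p.2 → Psi q.1 = q.2 := by
    intro p q w
    induction w with
    | nil => exact id
    | cons h _ ih =>
      intro hp
      apply ih
      rw [(hH _ _).mp h |>.2, ← hp]
      exact hPsi _ _ ((hH _ _).mp h).1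
  intro j hj hr
  exact hj ((key _ _ hr.some hvi).symm.trans hvi)
end

section
/- Let P be a regular path in the auxiliary graph H from v_i to u_j, let V(P) ⊆ V(G) be the set of G-vertices appearing in P, and let U = V(P) × Σ. Then there exist |Σ| pairwise vertex-disjoint paths P_1, …, P_{|Σ|} in H and a partition of U into sets U_1, …, U_{|Σ|} such that for each r, the vertex set of P_r is exactly U_r and P_r is a path from some vertex v_{i₁} ∈ {v} × Σ to some vertex u_{i₂} ∈ {u} × Σ. -/
open SimpleGraph

variable {V L : Type}

/-- A set of vertices of the auxiliary graph is regular if it contains at most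
one copy of each vertex of `G`. -/
def RegularSet {V L : Type} (S : Set (V × L)) : Prop :=
  ∀ a ∈ S, ∀ b ∈ S, a.1 = b.1 → a = b

/-- `[S]`: all copies of vertices of `G` having a copy in `S`. -/
def Copies {V L : Type} (S : Set (V × L)) : Set (V × L) :=
  {p | ∃ s : L, (p.1, s) ∈ S}

/-- Open neighborhood of a vertex set. -/
def NbhdSet {W : Type} (G : SimpleGraph W) (Z : Set W) : Set W :=
  {b | b ∉ Z ∧ ∃ a ∈ Z, G.Adj a b}

/-- `Z` is connected (as a set): any two of its vertices are joined by a walk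
staying inside `Z`. -/
def ConnIn {W : Type} (G : SimpleGraph W) (Z : Set W) : Prop :=
  ∀ a ∈ Z, ∀ b ∈ Z, ∃ p : G.Walk a b, ∀ x ∈ p.support, x ∈ Z

/-- `C` is a connected component of the subgraph of `G` induced by `Z`. -/
def IsCompOf {W : Type} (G : SimpleGraph W) (Z C : Set W) : Prop :=
  C.Nonempty ∧ C ⊆ Z ∧ ConnIn G C ∧ ∀ a ∈ C, ∀ b ∈ Z, G.Adj a b → b ∈ C


lemma zipWith_fst_eq' {α β : Type} (l : List α) (l' : List β) (h : l.length = l'.length) :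
    List.zipWith (fun a _ => a) l l' = l := by
  induction l generalizing l' with
  | nil => simp
  | cons a t ih =>
    cases l' with
    | nil => simp at h
    | cons b t' => simp only [List.zipWith_cons_cons]; rw [ih t' (by simpa using h)]

lemma key_translate (G : SimpleGraph V) (phi : V → V → Equiv.Perm L)
    (H : SimpleGraph (V × L)) (hH : AuxAdj G phi H) :
    ∀ (x z : V × L) (p : H.Walk x z),
    ∃ (b : L → L) (πs : List (L → L)) (Q : ∀ t : L, H.Walk (x.1, t) (z.1, b t)),
      Function.Bijective b ∧ (∀ π ∈ πs, Function.Bijective π) ∧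
      πs.length = p.support.length ∧
      ∀ t, (Q t).support = List.zipWith (fun w π => (w, π t)) (p.support.map Prod.fst) πs := by
  intro x z p
  induction p with
  | nil =>
    refine ⟨id, [id], fun t => Walk.nil, Function.bijective_id, ?_, by simp, by simp⟩
    intro π hπ; simp at hπ; subst hπ; exact Function.bijective_id
  | @cons x y z h q ih =>
    obtain ⟨b, πs, Q, hb, hπ, hlen, hsup⟩ := ih
    obtain ⟨hG, -⟩ := (hH x y).1 h
    set σ : L → L := fun t => phi x.1 y.1 t with hσ
    refine ⟨b ∘ σ, (fun t => t) :: πs.map (· ∘ σ),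
      fun t => Walk.cons ((hH (x.1, t) (y.1, σ t)).2 ⟨hG, rfl⟩) (Q (σ t)),
      hb.comp (phi x.1 y.1).bijective, ?_, by simpa using hlen, ?_⟩
    · intro π hπ
      simp only [List.mem_cons, List.mem_map] at hπ
      rcases hπ with rfl | ⟨π', hπ', rfl⟩
      · exact Function.bijective_id
      · exact (hπ π' hπ').comp (phi x.1 y.1).bijective
    · intro t
      simp only [Walk.support_cons, List.map_cons, List.zipWith_cons_cons, hsup (σ t),
        List.zipWith_map_right]
      rfl

theorem regular_path_copies [Fintype V] [Fintype L] [DecidableEq V] [DecidableEq L]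
    (G : SimpleGraph V) (phi : V → V → Equiv.Perm L) (H : SimpleGraph (V × L))
    (hphi : PhiInv phi) (hH : AuxAdj G phi H)
    (v u : V) (i j : L) (p : H.Walk (v, i) (u, j)) (hpath : p.IsPath)
    (hreg : RegularSet {x | x ∈ p.support}) :
    ∃ (a b : L → L) (P : ∀ r : L, H.Walk (v, a r) (u, b r)) (U : L → Set (V × L)),
      (∀ r : L, (P r).IsPath) ∧
      (∀ r : L, {x | x ∈ (P r).support} = U r) ∧
      (Pairwise fun r s : L => Disjoint (U r) (U s)) ∧
      (⋃ r : L, U r) = {x : V × L | ∃ s : L, (x.1, s) ∈ p.support} := by 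
  obtain ⟨b, πs, Q, hb, hπ, hlen, hsup⟩ := key_translate G phi H hH (v, i) (u, j) p
  set ws : List V := p.support.map Prod.fst with hws
  have hwslen : ws.length = πs.length := by simp [hws, hlen]
  have hwsnodup : ws.Nodup := by
    refine List.Nodup.map_on ?_ hpath.support_nodup
    intro a ha c hc hac
    exact hreg a ha c hc hac
  have hmapfst : ∀ t, ((Q t).support.map Prod.fst) = ws := by
    intro t
    rw [hsup t, List.map_zipWith]
    exact zipWith_fst_eq' ws πs hwslen
  refine ⟨id, b, Q, fun r => {x | x ∈ (Q r).support}, ?_, fun r => rfl, ?_, ?_⟩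
  · intro r
    rw [Walk.isPath_def]
    exact (hmapfst r ▸ hwsnodup).of_map Prod.fst
  · intro r s hrs
    rw [Set.disjoint_left]
    rintro x hxr hxs
    simp only [Set.mem_setOf_eq, hsup] at hxr hxs
    rw [List.mem_iff_getElem] at hxr hxs
    obtain ⟨k, hk, hk'⟩ := hxr
    obtain ⟨k2, hk2, hk2'⟩ := hxs
    rw [List.getElem_zipWith] at hk' hk2'
    have hkk : k = k2 := by
      have h1 : ws[k]'(by simpa [hwslen] using hk) = ws[k2]'(by simpa [hwslen] using hk2) := by
        have := congrArg Prod.fst (hk'.trans hk2'.symm)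
        simpa using this
      exact (List.Nodup.getElem_inj_iff hwsnodup).1 h1
    subst hkk
    have h2 : (πs[k]'(by simpa [← hwslen] using hk)) r = (πs[k]'(by simpa [← hwslen] using hk)) s := by
      have := congrArg Prod.snd (hk'.trans hk2'.symm)
      simpa using this
    have hkπ : k < πs.length := by
      have h := hk
      simp only [List.length_zipWith, lt_min_iff] at h
      exact h.2
    have hbij := hπ (πs[k]'hkπ) (List.getElem_mem hkπ)
    exact hrs (hbij.injective h2)
  · ext x
    simp only [Set.mem_iUnion, Set.mem_setOf_eq]
    constructor
    · rintro ⟨r, hr⟩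
      simp only [Set.mem_setOf_eq, hsup] at hr
      rw [List.mem_iff_getElem] at hr
      obtain ⟨k, hk, hk'⟩ := hr
      rw [List.getElem_zipWith] at hk'
      have hkp : k < p.support.length := by
        have h := hk
        simp only [List.length_zipWith, lt_min_iff, hws, List.length_map] at h
        exact h.1
      refine ⟨(p.support[k]'hkp).2, ?_⟩
      have hx1 : x.1 = (p.support[k]'hkp).1 := by
        have := congrArg Prod.fst hk'
        simp only [hws] at this ⊢
        rw [← this]
        simp [List.getElem_map]
      rw [hx1]
      simp only [Prod.mk.eta]
      exact List.getElem_mem hkp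
    · rintro ⟨s, hs⟩
      rw [List.mem_iff_getElem] at hs
      obtain ⟨k, hk, hk'⟩ := hs
      have hkπ : k < πs.length := hlen.symm ▸ hk
      obtain ⟨r, hr⟩ := (hπ _ (List.getElem_mem hkπ)).surjective x.2
      refine ⟨r, ?_⟩
      simp only [Set.mem_setOf_eq, hsup]
      rw [List.mem_iff_getElem]
      refine ⟨k, ?_, ?_⟩
      · simp only [List.length_zipWith, List.length_map, hlen]
        omega
      · rw [List.getElem_zipWith]
        have : ws[k]'(by simpa [hws] using hk) = x.1 := by
          simp only [hws, List.getElem_map]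
          rw [hk']
        rw [this, hr]
end

section
/- Let Z be a connected regular vertex set of the auxiliary graph H such that N[Z] is regular, let Y = N(Z), let Z' = [Z] \ Z and Y' = [Y] \ Y (where [S] denotes the set of all copies {w} × Σ of G-vertices w having a copy in S). Then Y' ⊆ N(Z') ⊆ [Y]. -/
open SimpleGraph

variable {V L : Type}

theorem partial_symmetry [Fintype V] [Fintype L] [DecidableEq V] [DecidableEq L]
    (G : SimpleGraph V) (phi : V → V → Equiv.Perm L) (H : SimpleGraph (V × L))
    (hphi : PhiInv phi) (hH : AuxAdj G phi H)
    (Z : Set (V × L)) (hZconn : ConnIn H Z) (hZreg : RegularSet Z)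
    (hNreg : RegularSet (Z ∪ NbhdSet H Z)) :
    (Copies (NbhdSet H Z) \ NbhdSet H Z) ⊆ NbhdSet H (Copies Z \ Z) ∧
    NbhdSet H (Copies Z \ Z) ⊆ Copies (NbhdSet H Z) := by
  constructor
  · rintro ⟨w, t⟩ ⟨⟨j, hwjY⟩, hqY⟩
    obtain ⟨hwjZ, ⟨u, i⟩, huiZ, hadj⟩ := hwjY
    rw [hH] at hadj
    obtain ⟨hGuw, hj⟩ := hadj
    have hnoW : ∀ r : L, (w, r) ∉ Z := by
      intro r hr
      exact hwjZ (hNreg (w, j) (Or.inr ⟨hwjZ, ⟨(u, i), huiZ,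
        (hH _ _).mpr ⟨hGuw, hj⟩⟩⟩) (w, r) (Or.inl hr) rfl ▸ hr)
    refine ⟨fun hc => (hnoW _ (hc.1.choose_spec)), (u, (phi u w)⁻¹ t), ⟨⟨i, huiZ⟩, ?_⟩, ?_⟩
    · intro husZ
      have := hZreg _ husZ _ huiZ rfl
      have hti : ((phi u w)⁻¹ : Equiv.Perm L) t = i := congrArg Prod.snd this
      apply hqY
      have : t = (phi u w) i := by
        rw [← hti]; simp
      rw [this, ← hj]
      exact ⟨hwjZ, ⟨(u, i), huiZ, (hH _ _).mpr ⟨hGuw, hj⟩⟩⟩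
    · exact (hH _ _).mpr ⟨hGuw, by simp⟩
  · rintro q ⟨hqnZ', ⟨u, s⟩, ⟨⟨i, huiZ⟩, hpsZ⟩, hadj⟩
    rw [hH] at hadj
    obtain ⟨hGuw, hq2⟩ := hadj
    set w := q.1 with hw
    by_cases hq0 : (w, (phi u w) i) ∈ Z
    · exfalso
      have hqZ : q ∈ Z := by
        by_contra hqZ
        exact hqnZ' ⟨⟨(phi u w) i, hq0⟩, hqZ⟩
      have := hZreg q hqZ _ hq0 rfl
      have h2 : q.2 = (phi u w) i := congrArg Prod.snd this
      have : s = i := (phi u w).injective (hq2 ▸ h2)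
      exact hpsZ (this ▸ huiZ)
    · exact ⟨(phi u w) i, hq0, ⟨(u, i), huiZ, (hH _ _).mpr ⟨hGuw, rfl⟩⟩⟩
end

section
/- Let Z be a connected regular vertex set of H with N[Z] regular, and let Z' = [Z] \ Z. Then for every connected component C of the subgraph of H induced by Z' and every G-vertex v having some copy v_j in N(Z), the neighborhood N(C) contains at least one copy of v. -/
open SimpleGraph

variable {V L : Type}

lemma lift_walk_aux (G : SimpleGraph V) (phi : V → V → Equiv.Perm L)
    (H : SimpleGraph (V × L)) (hH : AuxAdj G phi H)
    (Z : Set (V × L)) (hZreg : RegularSet Z) :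
    ∀ {a b : V × L} (p : H.Walk a b), (∀ x ∈ p.support, x ∈ Z) →
      ∀ r', r' ≠ a.2 → ∃ t', t' ≠ b.2 ∧
        ∃ q : H.Walk (a.1, r') (b.1, t'), ∀ x ∈ q.support, x ∈ Copies Z \ Z := by
  intro a b p
  induction p with
  | @nil u =>
    intro hsupp r' hr'
    refine ⟨r', hr', Walk.nil, ?_⟩
    intro x hx
    simp only [Walk.support_nil, List.mem_singleton] at hx
    subst hx
    have huZ : u ∈ Z := hsupp u (by simp)
    refine ⟨⟨u.2, huZ⟩, ?_⟩
    intro hmem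
    exact hr' (congrArg Prod.snd (hZreg _ hmem _ huZ rfl))
  | @cons u v w h q ih =>
    intro hsupp r' hr'
    have huZ : u ∈ Z := hsupp u (by simp)
    have hadj := (hH u v).mp h
    have hr'' : phi u.1 v.1 r' ≠ v.2 := by
      rw [hadj.2]
      intro hcon
      exact hr' ((phi u.1 v.1).injective hcon)
    obtain ⟨t', ht', q', hq'⟩ := ih (fun x hx => hsupp x (by simp [hx])) _ hr''
    have hadj' : H.Adj (u.1, r') (v.1, phi u.1 v.1 r') :=
      (hH _ _).mpr ⟨hadj.1, rfl⟩
    refine ⟨t', ht', Walk.cons hadj' q', ?_⟩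
    intro x hx
    rw [Walk.support_cons] at hx
    rcases List.mem_cons.mp hx with hx | hx
    · subst hx
      refine ⟨⟨u.2, huZ⟩, ?_⟩
      intro hmem
      exact hr' (congrArg Prod.snd (hZreg _ hmem _ huZ rfl))
    · exact hq' x hx

lemma comp_end {W : Type} (G : SimpleGraph W) (Z C : Set W)
    (hC : IsCompOf G Z C) :
    ∀ {a b : W} (p : G.Walk a b), a ∈ C → (∀ x ∈ p.support, x ∈ Z) → b ∈ C := by
  intro a b p
  induction p with
  | nil => intro h _; exact h
  | @cons u v w h q ih =>
    intro hu hsupp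
    exact ih (hC.2.2.2 u hu v (hsupp v (by simp)) h)
      (fun x hx => hsupp x (by simp [hx]))

theorem component_sees_all_copies [Fintype V] [Fintype L] [DecidableEq V] [DecidableEq L]
    (G : SimpleGraph V) (phi : V → V → Equiv.Perm L) (H : SimpleGraph (V × L))
    (hphi : PhiInv phi) (hH : AuxAdj G phi H)
    (Z : Set (V × L)) (hZconn : ConnIn H Z) (hZreg : RegularSet Z)
    (hNreg : RegularSet (Z ∪ NbhdSet H Z))
    (C : Set (V × L)) (hC : IsCompOf H (Copies Z \ Z) C) :
    ∀ (v : V) (j : L), (v, j) ∈ NbhdSet H Z → ∃ i : L, (v, i) ∈ NbhdSet H C := by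
  intro v j hvj
  obtain ⟨hvjZ, a, haZ, hadj⟩ := hvj
  have hav := (hH a (v, j)).mp hadj
  have hnov : ∀ i, (v, i) ∉ Z := by
    intro i hi
    have heq : ((v, i) : V × L) = (v, j) :=
      hNreg _ (Or.inl hi) _ (Or.inr ⟨hvjZ, a, haZ, hadj⟩) rfl
    exact hvjZ (heq ▸ hi)
  obtain ⟨⟨c, t⟩, hcC⟩ := hC.1
  have hct := hC.2.1 hcC
  obtain ⟨sc, hscZ⟩ := hct.1
  have htne : t ≠ sc := fun h => hct.2 (h ▸ hscZ)
  obtain ⟨p, hp⟩ := hZconn (c, sc) hscZ a haZ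
  obtain ⟨t', ht', q, hq⟩ := lift_walk_aux G phi H hH Z hZreg p hp t htne
  have huC : (a.1, t') ∈ C := comp_end H _ C hC q hcC hq
  refine ⟨phi a.1 v t', ?_, ⟨a.1, t'⟩, huC, (hH _ _).mpr ⟨hav.1, rfl⟩⟩
  intro hmem
  obtain ⟨s', hs'⟩ := (hC.2.1 hmem).1
  exact hnov s' hs'
end

section
/- Let Z be a connected regular vertex set of H with N[Z] regular and Z' = [Z] \ Z. If t_α lies in a connected component C of H[Z'], then some copy t_β of t lies in Z, and moreover for every vertex p_γ ∈ Z there is a label δ such that p_δ ∈ C. -/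
open SimpleGraph

variable {V L : Type}

theorem component_copy_claim [Fintype V] [Fintype L] [DecidableEq V] [DecidableEq L]
    (G : SimpleGraph V) (phi : V → V → Equiv.Perm L) (H : SimpleGraph (V × L))
    (hphi : PhiInv phi) (hH : AuxAdj G phi H)
    (Z : Set (V × L)) (hZconn : ConnIn H Z) (hZreg : RegularSet Z)
    (hNreg : RegularSet (Z ∪ NbhdSet H Z))
    (C : Set (V × L)) (hC : IsCompOf H (Copies Z \ Z) C)
    (t : V) (α : L) (ht : (t, α) ∈ C) :
    (∃ β : L, (t, β) ∈ Z) ∧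
    ∀ (p : V) (γ : L), (p, γ) ∈ Z → ∃ δ : L, (p, δ) ∈ C := by
  obtain ⟨hCne, hCsub, hCconn, hCcl⟩ := hC
  have htZ' := hCsub ht
  obtain ⟨β, hβ⟩ := htZ'.1
  refine ⟨⟨β, hβ⟩, ?_⟩
  have key : ∀ {a b : V × L} (w : H.Walk a b), (∀ x ∈ w.support, x ∈ Z) →
      ∀ i', (a.1, i') ∈ C → ∃ δ, (b.1, δ) ∈ C := by
    intro a b w
    induction w with
    | nil => exact fun _ i' h => ⟨i', h⟩
    | @cons a v b hadj w ih =>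
      intro hsup i' hi'
      have haZ : a ∈ Z := hsup a (by simp)
      have hvZ : v ∈ Z := hsup v (by simp)
      obtain ⟨hG, hlab⟩ := (hH a v).1 hadj
      set δ' := phi a.1 v.1 i' with hδ'
      have hnotZ : (a.1, i') ∉ Z := (hCsub hi').2
      have hvC : (v.1, δ') ∈ C := by
        apply hCcl (a.1, i') hi' (v.1, δ')
        · constructor
          · exact ⟨v.2, by simpa using hvZ⟩
          · intro hmem
            have : (v.1, δ') = v := hZreg _ hmem v hvZ rfl
            have hδv : δ' = v.2 := by
              have := congrArg Prod.snd this
              simpa using this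
            have hii : i' = a.2 := by
              apply (phi a.1 v.1).injective
              rw [← hδ', hδv, hlab]
            exact hnotZ (by rw [hii]; simpa using haZ)
        · exact (hH (a.1, i') (v.1, δ')).2 ⟨hG, rfl⟩
      exact ih (fun x hx => hsup x (by simp [hx])) δ' hvC
  intro p γ hp
  obtain ⟨w, hw⟩ := hZconn (t, β) hβ (p, γ) hp
  exact key w hw α ht
end

section
/- Suppose G is connected and has some feasible labeling. Then for a vertex v and label i, there exists a feasible labeling Ψ with Ψ(v) = i if and only if there is no label j ≠ i such that v_i and v_j lie in the same connected component of the auxiliary graph H. -/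
open SimpleGraph

variable {V L : Type}

/-- Transport permutation along a walk: compose the edge permutations. -/
def transport (phi : V → V → Equiv.Perm L) {G : SimpleGraph V} :
    ∀ {u w : V}, G.Walk u w → Equiv.Perm L
  | _, _, SimpleGraph.Walk.nil => 1
  | u, _, SimpleGraph.Walk.cons (v := x) _ p => transport phi p * phi u x

lemma transport_append (phi : V → V → Equiv.Perm L) {G : SimpleGraph V} :
    ∀ {u w x : V} (p : G.Walk u w) (q : G.Walk w x),
      transport phi (p.append q) = transport phi q * transport phi p
  | _, _, _, SimpleGraph.Walk.nil, q => by simp [transport]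
  | _, _, _, SimpleGraph.Walk.cons h p, q => by
      simp only [SimpleGraph.Walk.cons_append, transport, transport_append phi p q, mul_assoc]

lemma transport_reverse {phi : V → V → Equiv.Perm L} {G : SimpleGraph V}
    (hphi : PhiInv phi) :
    ∀ {u w : V} (p : G.Walk u w), transport phi p.reverse = (transport phi p)⁻¹
  | _, _, SimpleGraph.Walk.nil => by simp [transport]
  | _, _, SimpleGraph.Walk.cons h p => by
      rw [SimpleGraph.Walk.reverse_cons, transport_append, transport_reverse hphi p]
      simp only [transport, mul_inv_rev, one_mul]
      rw [hphi]

lemma reach_transport {phi : V → V → Equiv.Perm L} {G : SimpleGraph V}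
    {H : SimpleGraph (V × L)} (hH : AuxAdj G phi H) :
    ∀ {u w : V} (p : G.Walk u w) (a : L),
      H.Reachable (u, a) (w, transport phi p a)
  | _, _, SimpleGraph.Walk.nil, a => by
      simp only [transport, Equiv.Perm.coe_one, id_eq]
      exact SimpleGraph.Reachable.refl _
  | u, w, SimpleGraph.Walk.cons (v := x) h p, a => by
      have h1 : H.Adj (u, a) (x, phi u x a) := (hH _ _).2 ⟨h, rfl⟩
      exact h1.reachable.trans
        (by simpa [transport] using reach_transport hH p (phi u x a))

lemma walk_proj {phi : V → V → Equiv.Perm L} {G : SimpleGraph V}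
    {H : SimpleGraph (V × L)} (hH : AuxAdj G phi H) :
    ∀ {p q : V × L}, H.Walk p q → ∃ g : G.Walk p.1 q.1, transport phi g p.2 = q.2
  | _, _, SimpleGraph.Walk.nil => ⟨SimpleGraph.Walk.nil, rfl⟩
  | p, q, SimpleGraph.Walk.cons (v := r) h w => by
      obtain ⟨hadj, heq⟩ := (hH _ _).1 h
      obtain ⟨g, hg⟩ := walk_proj hH w
      exact ⟨SimpleGraph.Walk.cons hadj g, by simp [transport, ← heq, hg]⟩

lemma feasible_transport {phi : V → V → Equiv.Perm L} {G : SimpleGraph V}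
    {Psi : V → L} (hf : Feasible G phi Psi) :
    ∀ {u w : V} (p : G.Walk u w), Psi w = transport phi p (Psi u)
  | _, _, SimpleGraph.Walk.nil => by simp [transport]
  | u, w, SimpleGraph.Walk.cons (v := x) h p => by
      simp [transport, ← hf u x h, feasible_transport hf p]

theorem feasible_labeling_characterization
    [Fintype V] [Fintype L] [DecidableEq V] [DecidableEq L]
    (G : SimpleGraph V) (phi : V → V → Equiv.Perm L) (H : SimpleGraph (V × L))
    (hphi : PhiInv phi) (hH : AuxAdj G phi H)
    (hconn : G.Connected) (hfeas : ∃ Psi : V → L, Feasible G phi Psi)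
    (v : V) (i : L) :
    (∃ Psi : V → L, Feasible G phi Psi ∧ Psi v = i) ↔
      ¬ ∃ j : L, j ≠ i ∧ H.Reachable (v, i) (v, j) := by
  constructor
  · rintro ⟨Psi, hPsi, hv⟩ ⟨j, hji, hreach⟩
    obtain ⟨hw⟩ := hreach
    obtain ⟨g, hg⟩ := walk_proj hH hw
    change (transport phi g) i = j at hg
    have := feasible_transport hPsi g
    rw [hv] at this
    exact hji (hg.symm.trans this.symm)
  · intro hno
    obtain ⟨Psi0, hPsi0⟩ := hfeas
    -- key: any two walks from v to u transport i to the same label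
    have key : ∀ {u : V} (p q : G.Walk v u), transport phi p i = transport phi q i := by
      intro u p q
      by_contra hne
      refine hno ⟨(transport phi p)⁻¹ (transport phi q i), ?_, ?_⟩
      · intro hc
        have h := congrArg (transport phi p) hc
        exact hne (by simpa using h.symm)
      · have h1 := reach_transport hH q i
        have h2 := reach_transport hH p.reverse (transport phi q i)
        rw [transport_reverse hphi] at h2
        exact h1.trans h2
    classical
    set Psi : V → L := fun u => transport phi ((hconn v u).some) i with hPsidef
    have hval : ∀ (u : V) (p : G.Walk v u), Psi u = transport phi p i := fun u p =>
      key _ p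
    refine ⟨Psi, ?_, ?_⟩
    · intro u w huw
      have p := (hconn v u).some
      have hconcat : Psi w = transport phi ((hconn v u).some.concat huw) i :=
        hval w _
      rw [hconcat, SimpleGraph.Walk.concat_eq_append, transport_append]
      simp [transport, Psi]
    · have : Psi v = transport phi (SimpleGraph.Walk.nil : G.Walk v v) i := hval v _
      simpa [transport] using this
end

section
/- If for every connected component of the auxiliary graph H and every vertex u of G, the component contains at most one copy of u, then G has a feasible labeling. Specifically, the map assigning to each u the unique label r such that u_r lies in the component of any fixed vertex v_i (for a connected G) is a feasible labeling. -/
open SimpleGraph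

variable {V L : Type}

theorem unique_copy_components_give_feasible_labeling
    [Fintype V] [Fintype L] [DecidableEq V] [DecidableEq L]
    (G : SimpleGraph V) (phi : V → V → Equiv.Perm L) (H : SimpleGraph (V × L))
    (hphi : PhiInv phi) (hH : AuxAdj G phi H)
    (hconn : G.Connected)
    (hone : ∀ (u : V) (s t : L) (x : V × L),
      H.Reachable x (u, s) → H.Reachable x (u, t) → s = t)
    (v : V) (i : L) :
    ∃ Psi : V → L, Feasible G phi Psi ∧
      ∀ (u : V) (r : L), (H.Reachable (v, i) (u, r) ↔ Psi u = r) := by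
  have step : ∀ u w r, G.Adj u w → H.Reachable (v, i) (u, r) →
      H.Reachable (v, i) (w, phi u w r) := by
    intro u w r ha hr
    exact hr.trans (SimpleGraph.Adj.reachable ((hH (u, r) (w, phi u w r)).2 ⟨ha, rfl⟩))
  have ex0 : ∀ {a b : V} (p : G.Walk a b) (r : L),
      H.Reachable (v, i) (a, r) → ∃ s, H.Reachable (v, i) (b, s) := by
    intro a b p
    induction p with
    | nil => exact fun r hr => ⟨r, hr⟩
    | cons h p ih => exact fun r hr => ih _ (step _ _ _ h hr)
  have ex : ∀ u, ∃ r, H.Reachable (v, i) (u, r) := by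
    intro u
    obtain ⟨w⟩ := hconn v u
    exact ex0 w i (SimpleGraph.Reachable.refl _)
  choose Psi hPsi using ex
  refine ⟨Psi, ?_, ?_⟩
  · intro u w ha
    exact hone w _ _ (v, i) (hPsi w) (step u w (Psi u) ha (hPsi u))
  · intro u r
    constructor
    · intro hr
      exact hone u _ _ (v, i) (hPsi u) hr
    · rintro rfl
      exact hPsi u
end

section
/- G admits a feasible labeling if and only if for every vertex v of G there exists a label i ∈ Σ such that there is no path in the auxiliary graph H from v_i to v_j for any j ≠ i. -/
open SimpleGraph

variable {V L : Type}

/-- Parallel transport along a reachability in `H`: there is a permutation of labels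
carrying the starting fiber to the ending fiber. -/
lemma transport_perm (G : SimpleGraph V) (phi : V → V → Equiv.Perm L)
    (H : SimpleGraph (V × L)) (hH : AuxAdj G phi H) :
    ∀ {p q : V × L}, H.Reachable p q →
      ∃ σ : Equiv.Perm L, σ p.2 = q.2 ∧ ∀ a, H.Reachable (p.1, a) (q.1, σ a) := by
  intro p q hpq
  obtain ⟨w⟩ := hpq
  induction w with
  | nil => exact ⟨1, rfl, fun a => Reachable.refl _⟩
  | cons h w ih =>
    obtain ⟨σ, hσ, hall⟩ := ih
    rename_i y z q'
    obtain ⟨hadj, heq⟩ := (hH y z).mp h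
    refine ⟨(phi y.1 z.1).trans σ, ?_, fun a => ?_⟩
    · simp only [Equiv.trans_apply, ← heq, hσ]
    · have h1 : H.Adj (y.1, a) (z.1, phi y.1 z.1 a) := by
        rw [hH]; exact ⟨hadj, rfl⟩
      have h2 := hall (phi y.1 z.1 a)
      exact h1.reachable.trans (by simpa using h2)

/-- If `Psi` is feasible, then reachability in `H` preserves the property
"second coordinate equals `Psi` of first coordinate". -/
lemma feasible_transport_s9 (G : SimpleGraph V) (phi : V → V → Equiv.Perm L)
    (H : SimpleGraph (V × L)) (hH : AuxAdj G phi H) {Psi : V → L}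
    (hPsi : Feasible G phi Psi) :
    ∀ {p q : V × L}, H.Reachable p q → p.2 = Psi p.1 → q.2 = Psi q.1 := by
  intro p q hpq
  obtain ⟨w⟩ := hpq
  induction w with
  | nil => exact id
  | cons h w ih =>
    rename_i y z q'
    intro hy
    obtain ⟨hadj, heq⟩ := (hH y z).mp h
    exact ih (by rw [heq, hy, ← hPsi y.1 z.1 hadj])

/-- Reachability in `G` lifts to reachability in `H` from any label. -/
lemma lift_reachable (G : SimpleGraph V) (phi : V → V → Equiv.Perm L)
    (H : SimpleGraph (V × L)) (hH : AuxAdj G phi H) :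
    ∀ {u w : V}, G.Reachable u w → ∀ a : L, ∃ b : L, H.Reachable (u, a) (w, b) := by
  intro u w huw
  obtain ⟨p⟩ := huw
  induction p with
  | nil => exact fun a => ⟨a, Reachable.refl _⟩
  | cons h p ih =>
    rename_i y z q'
    intro a
    obtain ⟨b, hb⟩ := ih (phi y z a)
    have h1 : H.Adj (y, a) (z, phi y z a) := by
      rw [hH]; exact ⟨h, rfl⟩
    exact ⟨b, h1.reachable.trans hb⟩

theorem main_characterization [Fintype V] [Fintype L] [DecidableEq V] [DecidableEq L]
    (G : SimpleGraph V) (phi : V → V → Equiv.Perm L) (H : SimpleGraph (V × L))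
    (hphi : PhiInv phi) (hH : AuxAdj G phi H) :
    (∃ Psi : V → L, Feasible G phi Psi) ↔
      ∀ v : V, ∃ i : L, ∀ j : L, j ≠ i → ¬ H.Reachable (v, i) (v, j) := by
  classical
  constructor
  · rintro ⟨Psi, hPsi⟩ v
    refine ⟨Psi v, fun j hj hr => hj ?_⟩
    exact feasible_transport_s9 G phi H hH hPsi hr rfl
  · intro h
    choose i0 hi0 using h
    set r : V → V := fun u => (G.connectedComponentMk u).out with hr_def
    have hr' : ∀ u, G.Reachable (r u) u := by
      intro u
      have : G.connectedComponentMk ((G.connectedComponentMk u).out)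
          = G.connectedComponentMk u := (G.connectedComponentMk u).out_eq
      exact (ConnectedComponent.exact this)
    have hex : ∀ u, ∃ b, H.Reachable (r u, i0 (r u)) (u, b) := fun u =>
      lift_reachable G phi H hH (hr' u) (i0 (r u))
    set Psi : V → L := fun u => Classical.choose (hex u) with hPsi_def
    have hR : ∀ u, H.Reachable (r u, i0 (r u)) (u, Psi u) := fun u =>
      Classical.choose_spec (hex u)
    refine ⟨Psi, fun u w huw => ?_⟩
    have hcomp : r u = r w := by
      have : G.connectedComponentMk u = G.connectedComponentMk w :=
        ConnectedComponent.sound huw.reachable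
      simp only [hr_def, this]
    -- reachabilities from the common root
    have A : H.Reachable (r u, i0 (r u)) (u, Psi u) := hR u
    have B : H.Reachable (r u, i0 (r u)) (w, Psi w) := by rw [hcomp]; exact hR w
    have C : H.Adj (u, Psi u) (w, phi u w (Psi u)) := by
      rw [hH]; exact ⟨huw, rfl⟩
    have D : H.Reachable (r u, i0 (r u)) (w, phi u w (Psi u)) := A.trans C.reachable
    by_contra hne
    -- transport the fiber discrepancy at `w` back to the root
    obtain ⟨τ, hτ, hτall⟩ := transport_perm G phi H hH B.symm
    have E : H.Reachable (r u, i0 (r u)) (r u, τ (phi u w (Psi u))) :=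
      D.trans (hτall (phi u w (Psi u)))
    have hne' : τ (phi u w (Psi u)) ≠ i0 (r u) := fun hc =>
      hne (τ.injective (hc.trans hτ.symm)).symm
    exact hi0 (r u) _ hne' E
end

section
/- Let X, Y be disjoint vertex sets in a finite graph G with no edge between X and Y. Among the minimum-size X–Y separators there is a unique one closest to X: i.e., there is a minimum X–Y separator S such that every minimum X–Y separator S' satisfies R(X,S) ⊆ R(X,S'). -/
open SimpleGraph

/-- `b` is reachable from `a` by a walk avoiding `S`. -/
def ReachAvoid {W : Type} (G : SimpleGraph W) (S : Set W) (a b : W) : Prop :=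
  ∃ p : G.Walk a b, ∀ x ∈ p.support, x ∉ S

/-- `R(X,S)`: the set of vertices reachable from `X` in `G - S`. -/
def RSet {W : Type} (G : SimpleGraph W) (X S : Set W) : Set W :=
  {b | ∃ a ∈ X, ReachAvoid G S a b}

/-- `S` is an `X`–`Y` separator: disjoint from `X ∪ Y` and hitting every
`X`–`Y` path. -/
def IsSep {W : Type} (G : SimpleGraph W) (X Y S : Set W) : Prop :=
  (∀ s ∈ S, s ∉ X ∪ Y) ∧ ∀ x ∈ X, ∀ y ∈ Y, ¬ ReachAvoid G S x y

/-!
Write `N(A)` for the open neighbourhood of `A`. A minimum separator `S` equals `N(R(X,S))`, so it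
is determined by its side `R(X,S)`. The map `A ↦ |N(A)|` is submodular, and if `A`, `B` are the
sides of two minimum separators then `N(A ∩ B)` and `N(A ∪ B)` are separators again; hence
`N(A ∩ B)` is a minimum separator whose side lies in `A ∩ B`. Taking `S` with `|R(X,S)|` least
among minimum separators therefore gives `R(X,S) ⊆ R(X,T)` for every minimum separator `T`.
-/

section Separators

variable {W : Type} {G : SimpleGraph W} {X Y S T A B : Set W}

lemma mem_rSet_of_adj {b c : W} (hb : b ∈ RSet G X S) (hbc : G.Adj b c) (hc : c ∉ S) :
    c ∈ RSet G X S := by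
  obtain ⟨a, ha, p, hp⟩ := hb
  refine ⟨a, ha, p.concat hbc, fun x hx => ?_⟩
  rw [Walk.support_concat, List.mem_append, List.mem_singleton] at hx
  rcases hx with hx | rfl
  · exact hp x hx
  · exact hc

lemma nbhdSet_rSet_subset : NbhdSet G (RSet G X S) ⊆ S := by
  rintro v ⟨hv, a, ha, hav⟩
  by_contra hvS
  exact hv (mem_rSet_of_adj ha hav hvS)

lemma rSet_nbhdSet_subset (hX : X ⊆ A) : RSet G X (NbhdSet G A) ⊆ A := by
  rintro b ⟨a, ha, p, hp⟩
  by_contra hb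
  obtain ⟨d, hd, hd₁, hd₂⟩ := p.exists_boundary_dart A (hX ha) hb
  exact hp d.snd (p.dart_snd_mem_support_of_mem_darts hd) ⟨hd₂, d.fst, hd₁, d.adj⟩

lemma nbhdSet_inter_union_nbhdSet_union_subset :
    NbhdSet G (A ∩ B) ∪ NbhdSet G (A ∪ B) ⊆ NbhdSet G A ∪ NbhdSet G B := by
  rintro v (⟨hv, a, ⟨haA, haB⟩, hav⟩ | ⟨hv, a, haA | haB, hav⟩)
  · by_cases hvA : v ∈ A
    · exact Or.inr ⟨fun hvB => hv ⟨hvA, hvB⟩, a, haB, hav⟩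
    · exact Or.inl ⟨hvA, a, haA, hav⟩
  · exact Or.inl ⟨fun hvA => hv (Or.inl hvA), a, haA, hav⟩
  · exact Or.inr ⟨fun hvB => hv (Or.inr hvB), a, haB, hav⟩

lemma nbhdSet_inter_inter_nbhdSet_union_subset :
    NbhdSet G (A ∩ B) ∩ NbhdSet G (A ∪ B) ⊆ NbhdSet G A ∩ NbhdSet G B := by
  rintro v ⟨⟨-, a, ⟨haA, haB⟩, hav⟩, hv, -⟩
  exact ⟨⟨fun hvA => hv (Or.inl hvA), a, haA, hav⟩, ⟨fun hvB => hv (Or.inr hvB), a, haB, hav⟩⟩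

lemma ncard_nbhdSet_inter_add_ncard_nbhdSet_union_le [Finite W] (G : SimpleGraph W) (A B : Set W) :
    (NbhdSet G (A ∩ B)).ncard + (NbhdSet G (A ∪ B)).ncard ≤
      (NbhdSet G A).ncard + (NbhdSet G B).ncard := by
  rw [← Set.ncard_union_add_ncard_inter, ← Set.ncard_union_add_ncard_inter (NbhdSet G A)]
  exact add_le_add (Set.ncard_le_ncard nbhdSet_inter_union_nbhdSet_union_subset)
    (Set.ncard_le_ncard nbhdSet_inter_inter_nbhdSet_union_subset)

/-- Every side `R(X,S)` of a separator has these properties, and they are all that is needed for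
`N(A)` to separate `X` from `Y`. -/
structure IsSepSide (G : SimpleGraph W) (X Y A : Set W) : Prop where
  subset : X ⊆ A
  disjoint : Disjoint A Y
  not_adj : ∀ a ∈ A, ∀ y ∈ Y, ¬ G.Adj a y

lemma IsSepSide.isSep_nbhdSet (hA : IsSepSide G X Y A) : IsSep G X Y (NbhdSet G A) := by
  refine ⟨fun s ⟨hs, a, ha, has⟩ hsXY => ?_, fun x hx y hy ⟨p, hp⟩ => ?_⟩
  · rcases hsXY with hsX | hsY
    · exact hs (hA.subset hsX)
    · exact hA.not_adj a ha s hsY has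
  · exact hA.disjoint.notMem_of_mem_right hy (rSet_nbhdSet_subset hA.subset ⟨x, hx, p, hp⟩)

lemma IsSepSide.inter (hA : IsSepSide G X Y A) (hB : IsSepSide G X Y B) :
    IsSepSide G X Y (A ∩ B) where
  subset := Set.subset_inter hA.subset hB.subset
  disjoint := hA.disjoint.mono_left Set.inter_subset_left
  not_adj a ha := hA.not_adj a ha.1

lemma IsSepSide.union (hA : IsSepSide G X Y A) (hB : IsSepSide G X Y B) :
    IsSepSide G X Y (A ∪ B) where
  subset := hA.subset.trans Set.subset_union_left
  disjoint := Disjoint.union_left hA.disjoint hB.disjoint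
  not_adj a ha := ha.elim (hA.not_adj a) (hB.not_adj a)

lemma IsSep.disjoint_rSet (hS : IsSep G X Y S) : Disjoint (RSet G X S) Y :=
  Set.disjoint_right.2 fun y hy ⟨a, ha, hay⟩ => hS.2 a ha y hy hay

lemma IsSep.isSepSide_rSet (hS : IsSep G X Y S) : IsSepSide G X Y (RSet G X S) where
  subset x hx := ⟨x, hx, Walk.nil, by simpa using fun hxS => hS.1 x hxS (Or.inl hx)⟩
  disjoint := hS.disjoint_rSet
  not_adj a ha y hy hay := hS.disjoint_rSet.notMem_of_mem_right hy
    (mem_rSet_of_adj ha hay fun hyS => hS.1 y hyS (Or.inr hy))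

def IsMinSep (G : SimpleGraph W) (X Y S : Set W) : Prop :=
  IsSep G X Y S ∧ ∀ S', IsSep G X Y S' → S.ncard ≤ S'.ncard

lemma IsSep.exists_isMinSep [Finite W] (hS : IsSep G X Y S) : ∃ S₀, IsMinSep G X Y S₀ :=
  Set.exists_min_image {S | IsSep G X Y S} Set.ncard (Set.toFinite _) ⟨S, hS⟩

lemma IsMinSep.ncard_eq (hS : IsMinSep G X Y S) (hT : IsMinSep G X Y T) : S.ncard = T.ncard :=
  (hS.2 T hT.1).antisymm (hT.2 S hS.1)

lemma IsMinSep.nbhdSet_rSet_eq [Finite W] (hS : IsMinSep G X Y S) :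
    NbhdSet G (RSet G X S) = S :=
  Set.eq_of_subset_of_ncard_le nbhdSet_rSet_subset (hS.2 _ hS.1.isSepSide_rSet.isSep_nbhdSet)

lemma IsMinSep.nbhdSet_rSet_inter [Finite W] (hS : IsMinSep G X Y S) (hT : IsMinSep G X Y T) :
    IsMinSep G X Y (NbhdSet G (RSet G X S ∩ RSet G X T)) := by
  have hA := hS.1.isSepSide_rSet
  have hB := hT.1.isSepSide_rSet
  have hinter := (hA.inter hB).isSep_nbhdSet
  have hsubmod := ncard_nbhdSet_inter_add_ncard_nbhdSet_union_le G (RSet G X S) (RSet G X T)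
  have hunion := hS.2 _ (hA.union hB).isSep_nbhdSet
  have hSside : (NbhdSet G (RSet G X S)).ncard ≤ S.ncard := Set.ncard_le_ncard nbhdSet_rSet_subset
  have hTside : (NbhdSet G (RSet G X T)).ncard ≤ T.ncard := Set.ncard_le_ncard nbhdSet_rSet_subset
  have hST := hS.ncard_eq hT
  exact ⟨hinter, fun S' hS' => le_trans (by omega) (hS.2 S' hS')⟩

lemma IsMinSep.rSet_subset_of_forall_ncard_rSet_le [Finite W] (hS : IsMinSep G X Y S)
    (hleast : ∀ S', IsMinSep G X Y S' → (RSet G X S).ncard ≤ (RSet G X S').ncard)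
    (hT : IsMinSep G X Y T) : RSet G X S ⊆ RSet G X T := by
  have hC := hS.nbhdSet_rSet_inter hT
  have hCside : RSet G X (NbhdSet G (RSet G X S ∩ RSet G X T)) ⊆ RSet G X S ∩ RSet G X T :=
    rSet_nbhdSet_subset (hS.1.isSepSide_rSet.inter hT.1.isSepSide_rSet).subset
  have hle : (RSet G X S).ncard ≤ (RSet G X S ∩ RSet G X T).ncard :=
    (hleast _ hC).trans (Set.ncard_le_ncard hCside)
  exact Set.inter_eq_left.1 (Set.eq_of_subset_of_ncard_le Set.inter_subset_left hle)

end Separators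

theorem unique_closest_min_separator_general {W : Type} [Fintype W]
    (G : SimpleGraph W) (X Y : Set W) (hdisj : Disjoint X Y)
    (hnoedge : ∀ x ∈ X, ∀ y ∈ Y, ¬ G.Adj x y) :
    ∃! S : Set W, IsSep G X Y S ∧
      (∀ S' : Set W, IsSep G X Y S' → S.ncard ≤ S'.ncard) ∧
      (∀ S' : Set W, IsSep G X Y S' → S'.ncard = S.ncard →
        RSet G X S ⊆ RSet G X S') := by
  have hX : IsSepSide G X Y X := ⟨subset_rfl, hdisj, hnoedge⟩
  obtain ⟨S₁, hS₁⟩ := hX.isSep_nbhdSet.exists_isMinSep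
  obtain ⟨S, hS, hleast⟩ := Set.exists_min_image {S | IsMinSep G X Y S}
    (fun S => (RSet G X S).ncard) (Set.toFinite _) ⟨S₁, hS₁⟩
  have hclosest : ∀ T, IsMinSep G X Y T → RSet G X S ⊆ RSet G X T :=
    fun T hT => hS.rSet_subset_of_forall_ncard_rSet_le hleast hT
  refine ⟨S, ⟨hS.1, hS.2, fun S' hS' hcard => hclosest S' ⟨hS', fun T hT => ?_⟩⟩, ?_⟩
  · exact hcard.le.trans (hS.2 T hT)
  rintro S' ⟨hS'sep, hS'min, hS'closest⟩
  have hS' : IsMinSep G X Y S' := ⟨hS'sep, hS'min⟩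
  rw [← hS'.nbhdSet_rSet_eq, ← hS.nbhdSet_rSet_eq,
    (hclosest S' hS').antisymm (hS'closest S hS.1 (hS.ncard_eq hS'))]

theorem unique_closest_min_separator {W : Type} [Fintype W] [DecidableEq W]
    (G : SimpleGraph W) (X Y : Set W) (hdisj : Disjoint X Y)
    (hnoedge : ∀ x ∈ X, ∀ y ∈ Y, ¬ G.Adj x y) :
    ∃! S : Set W, IsSep G X Y S ∧
      (∀ S' : Set W, IsSep G X Y S' → S.ncard ≤ S'.ncard) ∧
      (∀ S' : Set W, IsSep G X Y S' → S'.ncard = S.ncard →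
        RSet G X S ⊆ RSet G X S') :=
  unique_closest_min_separator_general G X Y hdisj hnoedge
end

section
/- Let X, Y be disjoint vertex sets in a finite graph G with minimum X–Y separator size ℓ > 0, and let J₁ ⊂ J₂ ⊂ ⋯ ⊂ J_q be a chain of vertex sets with X ⊆ J_i ⊆ V(G) \ Y, each J_i reachable from X in G[J_i], |N(J_i)| = ℓ for all i, and such that every minimum X–Y separator is contained in ⋃_i N(J_i). Then N(J₁) is the unique minimum X–Y separator closest to X. -/
open SimpleGraph

/-- a walk avoiding `NbhdSet G J` starting in `J` stays in `J`. -/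
lemma walk_in_J {W : Type} (G : SimpleGraph W) (Jset : Set W) :
    ∀ {a b : W} (p : G.Walk a b), a ∈ Jset →
      (∀ x ∈ p.support, x ∉ NbhdSet G Jset) → ∀ x ∈ p.support, x ∈ Jset := by
  intro a b p
  induction p with
  | nil => intro ha _ x hx; simp at hx; subst hx; exact ha
  | @cons u v w h p ih =>
    intro ha havoid x hx
    have hv : v ∈ Jset := by
      by_contra hvn
      exact havoid v (by simp) ⟨hvn, u, ha, h⟩
    rw [SimpleGraph.Walk.support_cons] at hx
    rcases List.mem_cons.mp hx with rfl | hx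
    · exact ha
    · exact ih hv (fun y hy => havoid y (by simp [hy])) x hx

/-- First hit of a walk on `S`. -/
lemma firstHit {W : Type} (G : SimpleGraph W) (S : Set W) :
    ∀ {a b : W} (p : G.Walk a b), a ∉ S → (∃ w ∈ p.support, w ∈ S) →
      ∃ v s, G.Adj v s ∧ s ∈ S ∧ s ∈ p.support ∧
        ∃ q : G.Walk a v, ∀ x ∈ q.support, x ∉ S := by
  intro a b p
  induction p with
  | nil =>
    intro ha hw
    simp only [SimpleGraph.Walk.support_nil, List.mem_singleton] at hw
    obtain ⟨w, rfl, hwS⟩ := hw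
    exact absurd hwS ha
  | @cons u v w h p ih =>
    intro ha hw
    by_cases hv : v ∈ S
    · exact ⟨u, v, h, hv, by simp, SimpleGraph.Walk.nil, by simpa using ha⟩
    · obtain ⟨w', hw', hwS⟩ := hw
      rw [SimpleGraph.Walk.support_cons, List.mem_cons] at hw'
      rcases hw' with rfl | hw'
      · exact absurd hwS ha
      · obtain ⟨v', s, hadj, hsS, hsup, q, hq⟩ := ih hv ⟨w', hw', hwS⟩
        exact ⟨v', s, hadj, hsS, by simp [hsup],
          SimpleGraph.Walk.cons h q, by
            intro x hx
            rw [SimpleGraph.Walk.support_cons, List.mem_cons] at hx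
            rcases hx with rfl | hx
            · exact ha
            · exact hq x hx⟩

theorem first_layer_is_closest_min_separator {W : Type} [Fintype W] [DecidableEq W]
    (G : SimpleGraph W) (X Y : Set W) (hdisj : Disjoint X Y)
    (ℓ : ℕ) (hℓpos : 0 < ℓ)
    (hmin : (∃ S : Set W, IsSep G X Y S ∧ S.ncard = ℓ) ∧
      ∀ S : Set W, IsSep G X Y S → ℓ ≤ S.ncard)
    (q : ℕ) (hq : 0 < q) (J : Fin q → Set W)
    (hchain : ∀ i j : Fin q, i < j → J i ⊂ J j)
    (hXJ : ∀ i : Fin q, X ⊆ J i ∧ ∀ z ∈ J i, z ∉ Y)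
    (hreach : ∀ i : Fin q, ∀ z ∈ J i, ∃ x ∈ X,
      ∃ p : G.Walk x z, ∀ w ∈ p.support, w ∈ J i)
    (hN : ∀ i : Fin q, (NbhdSet G (J i)).ncard = ℓ)
    (hcover : ∀ S : Set W, IsSep G X Y S → S.ncard = ℓ →
      S ⊆ ⋃ i : Fin q, NbhdSet G (J i)) :
    IsSep G X Y (NbhdSet G (J ⟨0, hq⟩)) ∧
    (NbhdSet G (J ⟨0, hq⟩)).ncard = ℓ ∧
    (∀ S' : Set W, IsSep G X Y S' → S'.ncard = ℓ →
      RSet G X (NbhdSet G (J ⟨0, hq⟩)) ⊆ RSet G X S') ∧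
    (∀ S' : Set W, IsSep G X Y S' → S'.ncard = ℓ →
      (∀ S'' : Set W, IsSep G X Y S'' → S''.ncard = ℓ → RSet G X S' ⊆ RSet G X S'') →
      S' = NbhdSet G (J ⟨0, hq⟩)) := by
  set i0 : Fin q := ⟨0, hq⟩ with hi0
  set J0 : Set W := J i0 with hJ0
  have hJ0le : ∀ j : Fin q, J0 ⊆ J j := by
    intro j
    rcases eq_or_lt_of_le (Nat.zero_le j.val) with h | h
    · exact (congrArg J (Fin.ext h)).subset
    · exact (hchain i0 j h).subset
  -- every minimum separator is disjoint from J0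
  have hSdisj : ∀ S : Set W, IsSep G X Y S → S.ncard = ℓ → ∀ s ∈ S, s ∉ J0 := by
    intro S hS hSc s hs hsJ
    obtain ⟨j, hj⟩ := Set.mem_iUnion.mp (hcover S hS hSc hs)
    exact hj.1 (hJ0le j hsJ)
  -- N(J0) is disjoint from X
  have hNX : ∀ s ∈ NbhdSet G J0, s ∉ X := fun s hs hsX => hs.1 ((hXJ i0).1 hsX)
  -- N(J0) is disjoint from Y
  have hNY : ∀ s ∈ NbhdSet G J0, s ∉ Y := by
    intro y hy hyY
    obtain ⟨hyJ, z, hzJ, hadj⟩ := hy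
    obtain ⟨x, hxX, p, hp⟩ := hreach i0 z hzJ
    obtain ⟨S, hS, hSc⟩ := hmin.1
    have := hS.2 x hxX y hyY
    rw [ReachAvoid] at this
    push_neg at this
    obtain ⟨s, hs, hsS⟩ := this (p.append (SimpleGraph.Walk.cons hadj SimpleGraph.Walk.nil))
    rw [SimpleGraph.Walk.mem_support_append_iff] at hs
    rcases hs with hs | hs
    · exact hSdisj S hS hSc s hsS (hp s hs)
    · simp only [SimpleGraph.Walk.support_cons, SimpleGraph.Walk.support_nil,
        List.mem_cons, List.mem_singleton, List.not_mem_nil, or_false] at hs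
      rcases hs with rfl | rfl
      · exact hSdisj S hS hSc s hsS hzJ
      · exact (hS.1 s hsS) (Set.mem_union_right _ hyY)
  -- N(J0) is a separator
  have hNsep : IsSep G X Y (NbhdSet G J0) := by
    constructor
    · intro s hs hsXY
      rcases hsXY with h | h
      · exact hNX s hs h
      · exact hNY s hs h
    · rintro x hxX y hyY ⟨p, hp⟩
      have hy : y ∈ J0 := walk_in_J G J0 p ((hXJ i0).1 hxX) hp y p.end_mem_support
      exact (hXJ i0).2 y hy hyY
  -- RSet of N(J0) is contained in J0
  have hRN : RSet G X (NbhdSet G J0) ⊆ J0 := by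
    rintro b ⟨a, haX, p, hp⟩
    exact walk_in_J G J0 p ((hXJ i0).1 haX) hp b p.end_mem_support
  -- J0 is reachable avoiding any minimum separator
  have hJ0R : ∀ S : Set W, IsSep G X Y S → S.ncard = ℓ → J0 ⊆ RSet G X S := by
    intro S hS hSc z hz
    obtain ⟨x, hxX, p, hp⟩ := hreach i0 z hz
    exact ⟨x, hxX, p, fun w hw hwS => hSdisj S hS hSc w hwS (hp w hw)⟩
  refine ⟨hNsep, hN i0, ?_, ?_⟩
  · intro S' hS' hS'c b hb
    exact hJ0R S' hS' hS'c (hRN hb)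
  · intro S' hS' hS'c hRmin
    -- RSet S' ⊆ J0
    have hRS' : RSet G X S' ⊆ J0 :=
      fun b hb => hRN (hRmin (NbhdSet G J0) hNsep (hN i0) hb)
    -- every s ∈ S' is in N(J0)
    have hsub : S' ⊆ NbhdSet G J0 := by
      intro s hs
      have hnotsep : ¬ IsSep G X Y (S' \ {s}) := by
        intro h
        have h1 := hmin.2 _ h
        have h2 : (S' \ {s}).ncard < S'.ncard :=
          Set.ncard_diff_singleton_lt_of_mem hs (Set.toFinite S')
        omega
      rw [IsSep] at hnotsep
      push_neg at hnotsep
      rcases hnotsep (fun t ht => hS'.1 t ht.1) with ⟨x, hxX, y, hyY, p, hp⟩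
      -- p must hit S'
      have hhit : ∃ w ∈ p.support, w ∈ S' := by
        by_contra hcon
        push_neg at hcon
        exact hS'.2 x hxX y hyY ⟨p, hcon⟩
      have hxS' : x ∉ S' := fun h => hS'.1 x h (Set.mem_union_left _ hxX)
      obtain ⟨v, s₂, hadj, hs₂S, hs₂sup, qw, hq⟩ := firstHit G S' p hxS' hhit
      have hs₂ : s₂ = s := by
        by_contra hne
        exact hp s₂ hs₂sup ⟨hs₂S, hne⟩
      subst hs₂
      have hvR : v ∈ RSet G X S' := ⟨x, hxX, qw, hq⟩
      exact ⟨hSdisj S' hS' hS'c s₂ hs₂S, v, hRS' hvR, hadj⟩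
    exact Set.eq_of_subset_of_ncard_le hsub (by rw [hN i0, hS'c]) (Set.toFinite _)
end

section
/- Let X, Y be disjoint vertex sets in a finite graph G with minimum X–Y separator size ℓ > 0, and let J₁ ⊂ ⋯ ⊂ J_q be a chain as in the separator-layer structure (X ⊆ J_i ⊆ V(G)\Y, |N(J_i)| = ℓ, every minimum X–Y separator contained in ⋃_i N(J_i)). Then for any 1 ≤ i ≤ q−1 and any vertex v ∈ J_{i+1} \ N[J_i], every minimal X–Y separator containing v has size at least ℓ + 1. -/
open SimpleGraph

theorem deep_vertices_only_in_large_minimal_separators {W : Type} [Fintype W] [DecidableEq W]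
    (G : SimpleGraph W) (X Y : Set W) (hdisj : Disjoint X Y)
    (ℓ : ℕ) (hℓpos : 0 < ℓ)
    (hmin : (∃ S : Set W, IsSep G X Y S ∧ S.ncard = ℓ) ∧
      ∀ S : Set W, IsSep G X Y S → ℓ ≤ S.ncard)
    (q : ℕ) (J : Fin q → Set W)
    (hchain : ∀ i j : Fin q, i < j → J i ⊂ J j)
    (hXJ : ∀ i : Fin q, X ⊆ J i ∧ ∀ z ∈ J i, z ∉ Y)
    (hreach : ∀ i : Fin q, ∀ z ∈ J i, ∃ x ∈ X,
      ∃ p : G.Walk x z, ∀ w ∈ p.support, w ∈ J i)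
    (hN : ∀ i : Fin q, (NbhdSet G (J i)).ncard = ℓ)
    (hcover : ∀ S : Set W, IsSep G X Y S → S.ncard = ℓ →
      S ⊆ ⋃ i : Fin q, NbhdSet G (J i)) :
    ∀ i j : Fin q, (i : ℕ) + 1 = (j : ℕ) →
      ∀ v : W, v ∈ J j → v ∉ J i ∪ NbhdSet G (J i) →
        ∀ S : Set W, IsSep G X Y S → (∀ S' : Set W, S' ⊂ S → ¬ IsSep G X Y S') →
          v ∈ S → ℓ + 1 ≤ S.ncard := by
  intro i j hij v hvJ hvN S hS hSmin hvS
  by_contra hlt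
  push_neg at hlt
  have hle : ℓ ≤ S.ncard := hmin.2 S hS
  have heq : S.ncard = ℓ := le_antisymm (by omega) hle
  have hcov := hcover S hS heq hvS
  rw [Set.mem_iUnion] at hcov
  obtain ⟨k, hk⟩ := hcov
  obtain ⟨hvk, a, haJ, hadj⟩ := hk
  rcases le_or_gt (k : ℕ) (i : ℕ) with hki | hik
  · -- N(J k) ⊆ J i ∪ N(J i), contradicting hvN
    have haJi : a ∈ J i := by
      rcases eq_or_lt_of_le hki with h | h
      · have : k = i := Fin.ext h
        rwa [this] at haJ
      · exact (hchain k i (Fin.lt_def.mpr h)).1 haJ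
    apply hvN
    by_cases hvJi : v ∈ J i
    · exact Or.inl hvJi
    · exact Or.inr ⟨hvJi, a, haJi, hadj⟩
  · -- j ≤ k, so v ∈ J j ⊆ J k, contradicting v ∉ J k
    have hjk : (j : ℕ) ≤ (k : ℕ) := by omega
    apply hvk
    rcases eq_or_lt_of_le hjk with h | h
    · have : j = k := Fin.ext h
      rwa [this] at hvJ
    · exact (hchain j k (Fin.lt_def.mpr h)).1 hvJ
end

section
/- Let v be a vertex, T a vertex set not containing v, and S₁, S₂ minimum v–T separators with R(v,S₁) ⊆ R(v,S₂) in a finite graph. If u ∈ R[v,S₂] := R(v,S₂) ∪ S₂, then there is a v–u path contained in R[v,S₂] that is internally vertex-disjoint from S₂ and contains at most one vertex of S₁. -/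
/-!
Minimality of a separator `S` forces every `s ∈ S` to have a neighbour in `R(v,S)`: otherwise
`S \ {s}` would still separate. Hence every `u ∈ R[v,S₂]` is reached by a walk that stays in
`R(v,S₂)` until it arrives at `u`. If this walk avoids `S₁`, then `u ∈ R(v,S₁)`, and a walk inside
`R(v,S₁) ⊆ R(v,S₂)` does the job. Otherwise, follow the walk back from `u` to the first vertex `x`
of `S₁` met, and enter that piece from `v` along a walk through `R(v,S₁)` ending at `x`; this walk
meets `S₁` only at `x`, and shortening it to a path keeps all these properties.
-/

open SimpleGraph

variable {W : Type} {G : SimpleGraph W}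

lemma mem_RSet_of_mem_support {X S : Set W} {a b x : W} (ha : a ∈ X) (p : G.Walk a b)
    (hp : ∀ y ∈ p.support, y ∉ S) (hx : x ∈ p.support) : x ∈ RSet G X S := by
  classical
  exact ⟨a, ha, p.takeUntil x hx, fun y hy => hp y (p.support_takeUntil_subset_support hx hy)⟩

lemma notMem_of_mem_RSet {X S : Set W} {x : W} (h : x ∈ RSet G X S) : x ∉ S := by
  obtain ⟨a, -, p, hp⟩ := h
  exact hp x p.end_mem_support

lemma mem_RSet_of_adj {X S : Set W} {a b : W} (ha : a ∈ RSet G X S) (hab : G.Adj a b)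
    (hb : b ∉ S) : b ∈ RSet G X S := by
  obtain ⟨c, hc, p, hp⟩ := ha
  refine ⟨c, hc, p.concat hab, fun x hx => ?_⟩
  rw [Walk.support_concat, List.mem_append, List.mem_singleton] at hx
  rcases hx with hx | rfl
  · exact hp x hx
  · exact hb

lemma IsSep.exists_adj_mem_RSet [Finite W] {X Y S : Set W} (hS : IsSep G X Y S)
    (hmin : ∀ S' : Set W, IsSep G X Y S' → S.ncard ≤ S'.ncard) {s : W} (hs : s ∈ S) :
    ∃ y ∈ RSet G X S, G.Adj y s := by
  have hnot : ¬ IsSep G X Y (S \ {s}) := fun h =>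
    (Set.ncard_sdiff_singleton_lt_of_mem hs (Set.toFinite S)).not_ge (hmin _ h)
  obtain ⟨x, hx, t, ht, q, hq⟩ : ∃ x ∈ X, ∃ t ∈ Y, ReachAvoid G (S \ {s}) x t := by
    by_contra! h
    exact hnot ⟨fun z hz => hS.1 z hz.1, h⟩
  have hxR : x ∈ RSet G X S :=
    ⟨x, hx, Walk.nil, fun z hz hzS => hS.1 z hzS (Or.inl (by simp_all))⟩
  have htR : t ∉ RSet G X S := fun ⟨a, ha, hat⟩ => hS.2 a ha t ht hat
  -- The edge along which `q` leaves `R(X,S)` must end in `S`, and `q` avoids `S \ {s}`.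
  obtain ⟨d, hd, hd_fst, hd_snd⟩ := q.exists_boundary_dart _ hxR htR
  have hs_snd : d.snd = s := by
    by_contra hne
    exact hd_snd (mem_RSet_of_adj hd_fst d.adj fun h =>
      hq d.snd (q.dart_snd_mem_support_of_mem_darts hd) ⟨h, hne⟩)
  exact ⟨d.fst, hd_fst, hs_snd ▸ d.adj⟩

lemma IsSep.exists_walk_of_mem_RSet_union [Finite W] {v : W} {Y S : Set W}
    (hS : IsSep G {v} Y S) (hmin : ∀ S' : Set W, IsSep G {v} Y S' → S.ncard ≤ S'.ncard)
    {u : W} (hu : u ∈ RSet G {v} S ∪ S) :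
    ∃ p : G.Walk v u, ∀ z ∈ p.support, z ∈ RSet G {v} S ∨ z = u := by
  rcases hu with ⟨_, rfl, p, hp⟩ | hu
  · exact ⟨p, fun z hz => Or.inl (mem_RSet_of_mem_support rfl p hp hz)⟩
  · obtain ⟨y, ⟨_, rfl, p, hp⟩, hyu⟩ := hS.exists_adj_mem_RSet hmin hu
    refine ⟨p.concat hyu, fun z hz => ?_⟩
    rw [Walk.support_concat, List.mem_append, List.mem_singleton] at hz
    rcases hz with hz | rfl
    · exact Or.inl (mem_RSet_of_mem_support rfl p hp hz)
    · exact Or.inr rfl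

lemma SimpleGraph.Walk.exists_walk_to_first_mem {A : Set W} {a b : W} (p : G.Walk a b)
    (hA : ∃ z ∈ p.support, z ∈ A) :
    ∃ x ∈ A, ∃ q : G.Walk a x, q.support ⊆ p.support ∧ ∀ y ∈ q.support, y ∈ A → y = x := by
  induction p with
  | nil =>
    obtain ⟨z, hz, hzA⟩ := hA
    rw [Walk.support_nil, List.mem_singleton] at hz
    exact ⟨_, hz ▸ hzA, Walk.nil, List.Subset.refl _, fun y hy _ => by simpa using hy⟩
  | @cons a c b h p ih =>
    by_cases ha : a ∈ A
    · exact ⟨a, ha, Walk.nil, by simp, fun y hy _ => by simpa using hy⟩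
    obtain ⟨z, hz, hzA⟩ := hA
    rw [Walk.support_cons, List.mem_cons] at hz
    obtain ⟨x, hx, q, hsub, hfirst⟩ :=
      ih ⟨z, hz.resolve_left (fun h => ha (h ▸ hzA)), hzA⟩
    refine ⟨x, hx, Walk.cons h q, by simpa using List.cons_subset_cons a hsub, fun y hy hyA => ?_⟩
    rw [Walk.support_cons, List.mem_cons] at hy
    exact hy.elim (fun h => absurd (h ▸ hyA) ha) (hfirst y · hyA)

lemma exists_walk_mem_RSet_meeting_once [Finite W] {v u : W} {T S₁ S₂ : Set W}
    (hS₁ : IsSep G {v} T S₁) (hS₂ : IsSep G {v} T S₂)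
    (hS₁min : ∀ S : Set W, IsSep G {v} T S → S₁.ncard ≤ S.ncard)
    (hS₂min : ∀ S : Set W, IsSep G {v} T S → S₂.ncard ≤ S.ncard)
    (hcov : RSet G {v} S₁ ⊆ RSet G {v} S₂) (hu : u ∈ RSet G {v} S₂ ∪ S₂) :
    ∃ (p : G.Walk v u) (x : W),
      ∀ z ∈ p.support, (z ∈ RSet G {v} S₂ ∨ z = u) ∧ (z ∈ S₁ → z = x) := by
  obtain ⟨w, hw⟩ := hS₂.exists_walk_of_mem_RSet_union hS₂min hu
  by_cases hu₁ : u ∈ RSet G {v} S₁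
  · obtain ⟨_, rfl, p, hp⟩ := hu₁
    exact ⟨p, u, fun z hz => ⟨Or.inl (hcov (mem_RSet_of_mem_support rfl p hp hz)),
      fun hz₁ => absurd hz₁ (hp z hz)⟩⟩
  have hmeet : ∃ z ∈ w.reverse.support, z ∈ S₁ := by
    by_contra! h
    exact hu₁ (mem_RSet_of_mem_support rfl w (fun z hz => h z (by simpa using hz))
      w.end_mem_support)
  obtain ⟨x, hx, q, hq_sub, hq_first⟩ := w.reverse.exists_walk_to_first_mem hmeet
  have hq_w : ∀ z ∈ q.support, z ∈ w.support := fun z hz => by simpa using hq_sub hz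
  obtain ⟨p, hp⟩ := hS₁.exists_walk_of_mem_RSet_union hS₁min (Or.inr hx)
  refine ⟨p.append q.reverse, x, fun z hz => ?_⟩
  rw [Walk.mem_support_append_iff, Walk.support_reverse, List.mem_reverse] at hz
  rcases hz with hz | hz
  · rcases hp z hz with hzR | rfl
    · exact ⟨Or.inl (hcov hzR), fun hz₁ => absurd hz₁ (notMem_of_mem_RSet hzR)⟩
    · exact ⟨hw z (hq_w z q.end_mem_support), fun _ => rfl⟩
  · exact ⟨hw z (hq_w z hz), hq_first z hz⟩

theorem path_avoiding_separators_general {W : Type} [Fintype W]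
    (G : SimpleGraph W) (v : W) (T : Set W)
    (S₁ S₂ : Set W)
    (hS₁ : IsSep G {v} T S₁) (hS₂ : IsSep G {v} T S₂)
    (hS₁min : ∀ S : Set W, IsSep G {v} T S → S₁.ncard ≤ S.ncard)
    (hS₂min : ∀ S : Set W, IsSep G {v} T S → S₂.ncard ≤ S.ncard)
    (hcov : RSet G {v} S₁ ⊆ RSet G {v} S₂)
    (u : W) (hu : u ∈ RSet G {v} S₂ ∪ S₂) :
    ∃ p : G.Walk v u, p.IsPath ∧
      (∀ x ∈ p.support, x ∈ RSet G {v} S₂ ∪ S₂) ∧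
      (∀ x ∈ p.support, x ∈ S₂ → x = u) ∧
      (∀ a ∈ p.support, ∀ b ∈ p.support, a ∈ S₁ → b ∈ S₁ → a = b) := by
  classical
  obtain ⟨p, x, hp⟩ := exists_walk_mem_RSet_meeting_once hS₁ hS₂ hS₁min hS₂min hcov hu
  have hpath := fun z (hz : z ∈ (p.toPath : G.Walk v u).support) =>
    hp z (p.support_toPath_subset_support hz)
  refine ⟨p.toPath, p.toPath.2, fun z hz => ?_, fun z hz hz₂ => ?_,
    fun a ha b hb ha₁ hb₁ => ?_⟩
  · rcases (hpath z hz).1 with hzR | rfl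
    · exact Or.inl hzR
    · exact hu
  · exact (hpath z hz).1.resolve_left fun hzR => notMem_of_mem_RSet hzR hz₂
  · rw [(hpath a ha).2 ha₁, (hpath b hb).2 hb₁]

theorem path_avoiding_separators {W : Type} [Fintype W] [DecidableEq W]
    (G : SimpleGraph W) (v : W) (T : Set W) (hvT : v ∉ T)
    (S₁ S₂ : Set W)
    (hS₁ : IsSep G {v} T S₁) (hS₂ : IsSep G {v} T S₂)
    (hS₁min : ∀ S : Set W, IsSep G {v} T S → S₁.ncard ≤ S.ncard)
    (hS₂min : ∀ S : Set W, IsSep G {v} T S → S₂.ncard ≤ S.ncard)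
    (hcov : RSet G {v} S₁ ⊆ RSet G {v} S₂)
    (u : W) (hu : u ∈ RSet G {v} S₂ ∪ S₂) :
    ∃ p : G.Walk v u, p.IsPath ∧
      (∀ x ∈ p.support, x ∈ RSet G {v} S₂ ∪ S₂) ∧
      (∀ x ∈ p.support, x ∈ S₂ → x = u) ∧
      (∀ a ∈ p.support, ∀ b ∈ p.support, a ∈ S₁ → b ∈ S₁ → a = b) :=
  path_avoiding_separators_general G v T S₁ S₂ hS₁ hS₂ hS₁min hS₂min hcov u hu
end

section
/- Let v be a vertex and T a set with v ∉ T in a finite graph, let ℓ be the minimum size of a v–T separator, let S₁, S₂ be minimum v–T separators with S₂ covering S₁ such that every vertex y ∈ R(v,S₂) \ R[v,S₁] lies only in minimal v–T separators of size ≥ ℓ+1. Let u ∈ R[v,S₂] and let P be a v–u path in R[v,S₂] internally disjoint from S₂ containing at most one vertex of S₁. Then every minimum v–(T ∪ {u}) separator disjoint from V(P) ∩ (S₁ ∪ S₂) and from R(v,S₁) has size at least ℓ + 1. -/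
open SimpleGraph

theorem augmented_separator_is_large {W : Type} [Fintype W] [DecidableEq W]
    (G : SimpleGraph W) (v : W) (T : Set W) (hvT : v ∉ T)
    (ℓ : ℕ)
    (hmin : (∃ S : Set W, IsSep G {v} T S ∧ S.ncard = ℓ) ∧
      ∀ S : Set W, IsSep G {v} T S → ℓ ≤ S.ncard)
    (S₁ S₂ : Set W)
    (hS₁ : IsSep G {v} T S₁) (hS₂ : IsSep G {v} T S₂)
    (hS₁card : S₁.ncard = ℓ) (hS₂card : S₂.ncard = ℓ)
    (hcov : RSet G {v} S₁ ⊆ RSet G {v} S₂)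
    (hdeep : ∀ y : W, y ∈ RSet G {v} S₂ → y ∉ RSet G {v} S₁ ∪ S₁ →
      ∀ S : Set W, IsSep G {v} T S → (∀ S' : Set W, S' ⊂ S → ¬ IsSep G {v} T S') →
        y ∈ S → ℓ + 1 ≤ S.ncard)
    (u : W) (hu : u ∈ RSet G {v} S₂ ∪ S₂)
    (P : G.Walk v u) (hPpath : P.IsPath)
    (hPin : ∀ x ∈ P.support, x ∈ RSet G {v} S₂ ∪ S₂)
    (hPS₂ : ∀ x ∈ P.support, x ∈ S₂ → x = u)
    (hPS₁ : ∀ a ∈ P.support, ∀ b ∈ P.support, a ∈ S₁ → b ∈ S₁ → a = b) :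
    ∀ S : Set W, IsSep G {v} (T ∪ {u}) S →
      Disjoint S ({x | x ∈ P.support} ∩ (S₁ ∪ S₂)) →
      Disjoint S (RSet G {v} S₁) →
      (∀ S' : Set W, IsSep G {v} (T ∪ {u}) S' → S.ncard ≤ S'.ncard) →
      ℓ + 1 ≤ S.ncard := by
  intro S hSep hd1 hd2 _hminS
  by_contra hlt
  push_neg at hlt
  -- S is a v–T separator
  have hSsepT : IsSep G {v} T S := by
    refine ⟨fun s hs => ?_, fun x hx y hy => hSep.2 x hx y (Or.inl hy)⟩
    have := hSep.1 s hs
    intro hmem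
    exact this (by rcases hmem with h | h; exact Or.inl h; exact Or.inr (Or.inl h))
  have hℓle : ℓ ≤ S.ncard := hmin.2 S hSsepT
  have hcard : S.ncard = ℓ := by omega
  -- S hits P
  have hnotreach : ¬ ReachAvoid G S v u :=
    hSep.2 v rfl u (Or.inr rfl)
  have hyex : ∃ y ∈ P.support, y ∈ S := by
    by_contra h
    push_neg at h
    exact hnotreach ⟨P, h⟩
  obtain ⟨y, hyP, hyS⟩ := hyex
  -- y ∉ S₁
  have hyS₁ : y ∉ S₁ := by
    intro h
    exact (Set.disjoint_left.mp hd1 hyS) ⟨hyP, Or.inl h⟩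
  -- y ∉ S₂
  have hyS₂ : y ∉ S₂ := by
    intro h
    have hyu : y = u := hPS₂ y hyP h
    have := hSep.1 y hyS
    exact this (Or.inr (Or.inr (by simp [hyu])))
  -- y ∈ RSet G {v} S₂
  have hyR2 : y ∈ RSet G {v} S₂ := by
    rcases hPin y hyP with h | h
    · exact h
    · exact absurd h hyS₂
  -- y ∉ RSet G {v} S₁ ∪ S₁
  have hyR1 : y ∉ RSet G {v} S₁ ∪ S₁ := by
    rintro (h | h)
    · exact (Set.disjoint_left.mp hd2 hyS) h
    · exact hyS₁ h
  -- S is a minimal v–T separator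
  have hminimal : ∀ S' : Set W, S' ⊂ S → ¬ IsSep G {v} T S' := by
    intro S' hsub hsep
    have h1 : ℓ ≤ S'.ncard := hmin.2 S' hsep
    have h2 : S'.ncard < S.ncard := Set.ncard_lt_ncard hsub (Set.toFinite S)
    omega
  have := hdeep y hyR2 hyR1 S hSsepT hminimal hyS
  omega
end
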